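/- arXiv:1803.11043 — 4 statements merged into one kernel-verified Lean document; each statement's English description precedes it below -/
import Mathlib

section
/- Let T > 0 and let G : ℝ^N → [0,∞) be a G-function. Let V(t,x) = K(t,x) − W(t,x) with K, W ∈ C¹([-T,T]×ℝ^N, ℝ), and assume there exist ε₀ > 0 and r > 0 such that W(t,x) ≥ (3+ε₀)·max{K(t,x), G(x)} whenever |x| > r and t ∈ [-T,T]. Let f : [-T,T] → ℝ^N be measurable with ∫_{-T}^{T} G*(f(t)) dt < ∞, and define J(u) = ∫_{-T}^{T} [G(u̇(t)) + V(t,u(t)) + ⟨f(t),u(t)⟩] dt. Then for every ρ > 0 there exists e ∈ W¹_T L^G with ‖e‖_W > ρ and J(e) < 0. -/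
/-!
Take `e` constant, equal to a vector `x` of large norm, so that `ė = 0`. For `|x| > r` the growth
condition gives `V(t,x) ≤ -(2+ε₀) G(x)`, and Fenchel–Young gives `⟨f,x⟩ ≤ G(x) + G*(f)`, hence
`J(e) ≤ ∫ G*(f) - 2T(1+ε₀) G(x)`, which is negative once `G(x)` is large. Superlinearity of `G`
makes both `G(x)` and `‖e‖_G` tend to infinity with `|x|`: an admissible `λ` in the Luxemburg
norm of `e` has `G(x/λ) ≤ 1/(2T)`, and this sublevel set of `G` is bounded.
-/

open MeasureTheory Set Filter
open scoped RealInnerProductSpace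

noncomputable section

/-- G-function -/
def IsGFun {N : ℕ} (G : EuclideanSpace ℝ (Fin N) → ℝ) : Prop :=
  ContDiff ℝ 1 G ∧ ConvexOn ℝ Set.univ G ∧ (∀ x, G (-x) = G x) ∧ G 0 = 0 ∧
    (∀ x, 0 ≤ G x) ∧
    Filter.Tendsto (fun x => G x / ‖x‖) (Filter.cocompact (EuclideanSpace ℝ (Fin N)))
      Filter.atTop

def Delta2Global {N : ℕ} (G : EuclideanSpace ℝ (Fin N) → ℝ) : Prop :=
  ∃ K₁ : ℝ, 2 < K₁ ∧ ∀ x, G ((2 : ℝ) • x) ≤ K₁ * G x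

def Nabla2Global {N : ℕ} (G : EuclideanSpace ℝ (Fin N) → ℝ) : Prop :=
  ∃ K₂ : ℝ, 1 < K₂ ∧ ∀ x, G x ≤ (1 / (2 * K₂)) * G (K₂ • x)

def Delta2 {N : ℕ} (G : EuclideanSpace ℝ (Fin N) → ℝ) : Prop :=
  ∃ K₁ : ℝ, 2 < K₁ ∧ ∃ M₁ : ℝ, 0 ≤ M₁ ∧ ∀ x, M₁ ≤ ‖x‖ → G ((2 : ℝ) • x) ≤ K₁ * G x

def Nabla2 {N : ℕ} (G : EuclideanSpace ℝ (Fin N) → ℝ) : Prop :=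
  ∃ K₂ : ℝ, 1 < K₂ ∧ ∃ M₂ : ℝ, 0 ≤ M₂ ∧ ∀ x, M₂ ≤ ‖x‖ → G x ≤ (1 / (2 * K₂)) * G (K₂ • x)

/-- modular -/
def modular {N : ℕ} (T : ℝ) (G : EuclideanSpace ℝ (Fin N) → ℝ)
    (u : ℝ → EuclideanSpace ℝ (Fin N)) : ℝ :=
  ∫ t in (-T)..T, G (u t)

/-- membership in the Orlicz space L^G on [-T,T] -/
def MemLG {N : ℕ} (T : ℝ) (G : EuclideanSpace ℝ (Fin N) → ℝ)
    (u : ℝ → EuclideanSpace ℝ (Fin N)) : Prop :=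
  AEStronglyMeasurable u (volume.restrict (Set.Icc (-T) T)) ∧
    IntegrableOn (fun t => G (u t)) (Set.Icc (-T) T)

/-- Luxemburg norm -/
def luxNorm {N : ℕ} (T : ℝ) (G : EuclideanSpace ℝ (Fin N) → ℝ)
    (u : ℝ → EuclideanSpace ℝ (Fin N)) : ℝ :=
  sInf {l : ℝ | 0 < l ∧ ∫ t in (-T)..T, G (l⁻¹ • u t) ≤ 1}

/-- membership in the periodic Orlicz–Sobolev space W¹_T L^G :
`u` is absolutely continuous with derivative `u'`, both in `L^G`, and `u(-T) = u(T)`. -/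
def MemW {N : ℕ} (T : ℝ) (G : EuclideanSpace ℝ (Fin N) → ℝ)
    (u u' : ℝ → EuclideanSpace ℝ (Fin N)) : Prop :=
  (∀ t ∈ Set.Icc (-T) T, u t = u (-T) + ∫ s in (-T)..t, u' s) ∧
    IntegrableOn u' (Set.Icc (-T) T) ∧ MemLG T G u ∧ MemLG T G u' ∧ u (-T) = u T

/-- Sobolev norm ‖u‖_W = ‖u‖_G + ‖u̇‖_G -/
def WNorm {N : ℕ} (T : ℝ) (G : EuclideanSpace ℝ (Fin N) → ℝ)
    (u u' : ℝ → EuclideanSpace ℝ (Fin N)) : ℝ :=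
  luxNorm T G u + luxNorm T G u'

/-- Simonenko lower index p_G -/
def simonP {N : ℕ} (G : EuclideanSpace ℝ (Fin N) → ℝ) : ℝ :=
  sInf {r : ℝ | ∃ x, x ≠ 0 ∧ r = ⟪x, gradient G x⟫ / G x}

/-- Simonenko upper index q_G -/
def simonQ {N : ℕ} (G : EuclideanSpace ℝ (Fin N) → ℝ) : ℝ :=
  sSup {r : ℝ | ∃ x, x ≠ 0 ∧ r = ⟪x, gradient G x⟫ / G x}

/-- the index q_G^∞ = limsup_{|x|→∞} ⟨x,∇G(x)⟩/G(x) -/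
def simonQInf {N : ℕ} (G : EuclideanSpace ℝ (Fin N) → ℝ) : ℝ :=
  Filter.limsup (fun x => ⟪x, gradient G x⟫ / G x)
    (Filter.cocompact (EuclideanSpace ℝ (Fin N)))

/-- Fenchel conjugate -/
def fenchel {N : ℕ} (G : EuclideanSpace ℝ (Fin N) → ℝ)
    (y : EuclideanSpace ℝ (Fin N)) : ℝ :=
  sSup {r : ℝ | ∃ x, r = ⟪x, y⟫ - G x}


open Topology

section Superlinear

variable {E : Type*} [NormedAddCommGroup E] [ProperSpace E] {G : E → ℝ}

lemma tendsto_sub_const_mul_norm_of_superlinear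
    (hG : Tendsto (fun x => G x / ‖x‖) (cocompact E) atTop) (c : ℝ) :
    Tendsto (fun x => G x - c * ‖x‖) (cocompact E) atTop := by
  have hnorm := tendsto_norm_cocompact_atTop (E := E)
  refine (hnorm.atTop_mul_atTop₀ (tendsto_atTop_add_const_right _ (-c) hG)).congr' ?_
  filter_upwards [hnorm.eventually_gt_atTop 0] with x hx
  field_simp
  ring

lemma exists_norm_le_max_of_superlinear
    (hG : Tendsto (fun x => G x / ‖x‖) (cocompact E) atTop) :
    ∃ R, ∀ x, ‖x‖ ≤ max R (G x) := by
  have h := (tendsto_sub_const_mul_norm_of_superlinear hG 1).eventually_ge_atTop 0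
  rw [← Metric.cobounded_eq_cocompact, ← comap_norm_atTop, eventually_comap,
    eventually_atTop] at h
  obtain ⟨R, hR⟩ := h
  refine ⟨R, fun x => ?_⟩
  rcases le_or_gt R ‖x‖ with hx | hx
  · exact le_max_of_le_right (by linarith [hR _ hx x rfl])
  · exact le_max_of_le_left hx.le

end Superlinear

namespace IsGFun

variable {N : ℕ} {G : EuclideanSpace ℝ (Fin N) → ℝ}

lemma bddAbove_fenchel_set (hG : IsGFun G) (y : EuclideanSpace ℝ (Fin N)) :
    BddAbove {r : ℝ | ∃ x, r = ⟪x, y⟫ - G x} := by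
  obtain ⟨hC1, -, -, -, -, hsuper⟩ := hG
  have hlim : Tendsto (fun x => ⟪x, y⟫ - G x) (cocompact _) atBot := by
    refine tendsto_atBot_mono (fun x => ?_) (tendsto_neg_atTop_atBot.comp
      (tendsto_sub_const_mul_norm_of_superlinear hsuper ‖y‖))
    have := real_inner_le_norm x y
    simp only [Function.comp_apply]
    nlinarith
  obtain ⟨x₀, hx₀⟩ :=
    ((continuous_id.inner continuous_const).sub hC1.continuous).exists_forall_ge hlim
  exact ⟨_, by rintro _ ⟨x, rfl⟩; exact hx₀ x⟩

lemma inner_le_add_fenchel (hG : IsGFun G) (x y : EuclideanSpace ℝ (Fin N)) :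
    ⟪x, y⟫ ≤ G x + fenchel G y := by
  have := le_csSup (hG.bddAbove_fenchel_set y) ⟨x, rfl⟩
  rw [fenchel]
  linarith

lemma abs_inner_le_add_fenchel (hG : IsGFun G) (x y : EuclideanSpace ℝ (Fin N)) :
    |⟪x, y⟫| ≤ G x + fenchel G y := by
  have hneg := hG.inner_le_add_fenchel (-x) y
  rw [inner_neg_left, hG.2.2.1 x] at hneg
  exact abs_le.2 ⟨by linarith, hG.inner_le_add_fenchel x y⟩

lemma luxNorm_const_set_nonempty (hG : IsGFun G) (T : ℝ) (x : EuclideanSpace ℝ (Fin N)) :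
    {l : ℝ | 0 < l ∧ ∫ _ in (-T)..T, G (l⁻¹ • x) ≤ 1}.Nonempty := by
  obtain ⟨hC1, -, -, hzero, -, -⟩ := hG
  have hlim : Tendsto (fun l : ℝ => (T - -T) * G (l⁻¹ • x)) atTop (𝓝 0) := by
    have hsmul := (tendsto_inv_atTop_zero (𝕜 := ℝ)).smul_const x
    rw [zero_smul] at hsmul
    have := (hC1.continuous.tendsto 0).comp hsmul
    rw [hzero] at this
    simpa using this.const_mul (T - -T)
  obtain ⟨l, hl0, hl1⟩ :=
    ((eventually_gt_atTop 0).and (hlim.eventually (eventually_le_nhds one_pos))).exists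
  exact ⟨l, hl0, by rwa [intervalIntegral.integral_const, smul_eq_mul]⟩

lemma exists_norm_div_le_luxNorm_const (hG : IsGFun G) {T : ℝ} (hT : 0 < T) :
    ∃ M > 0, ∀ x, ‖x‖ / M ≤ luxNorm T G (fun _ => x) := by
  obtain ⟨R, hR⟩ := exists_norm_le_max_of_superlinear hG.2.2.2.2.2
  have hM : 0 < max R (1 / (2 * T)) := lt_max_of_lt_right (by positivity)
  refine ⟨_, hM, fun x => le_csInf (hG.luxNorm_const_set_nonempty T x) ?_⟩
  rintro l ⟨hl, hint⟩
  rw [intervalIntegral.integral_const, smul_eq_mul] at hint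
  have hGl : G (l⁻¹ • x) ≤ 1 / (2 * T) := by
    rw [le_div_iff₀ (by positivity)]
    linarith
  have hxl : ‖x‖ / l ≤ max R (1 / (2 * T)) :=
    calc ‖x‖ / l = ‖l⁻¹ • x‖ := by
          rw [norm_smul, norm_inv, Real.norm_of_nonneg hl.le, inv_mul_eq_div]
      _ ≤ max R (G (l⁻¹ • x)) := hR _
      _ ≤ max R (1 / (2 * T)) := max_le_max le_rfl hGl
  rw [div_le_iff₀ hM]
  rw [div_le_iff₀ hl] at hxl
  linarith

lemma tendsto_luxNorm_const (hG : IsGFun G) {T : ℝ} (hT : 0 < T) :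
    Tendsto (fun x => luxNorm T G (fun _ => x)) (cocompact _) atTop := by
  obtain ⟨M, hM, h⟩ := hG.exists_norm_div_le_luxNorm_const hT
  exact tendsto_atTop_mono h (tendsto_norm_cocompact_atTop.atTop_div_const hM)

end IsGFun

lemma luxNorm_nonneg {N : ℕ} (T : ℝ) (G : EuclideanSpace ℝ (Fin N) → ℝ)
    (u : ℝ → EuclideanSpace ℝ (Fin N)) : 0 ≤ luxNorm T G u :=
  Real.sInf_nonneg fun _ hl => hl.1.le

lemma memW_const {N : ℕ} (T : ℝ) (G : EuclideanSpace ℝ (Fin N) → ℝ)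
    (x : EuclideanSpace ℝ (Fin N)) : MemW T G (fun _ => x) (fun _ => 0) := by
  have hconst : ∀ y : EuclideanSpace ℝ (Fin N), MemLG T G (fun _ => y) := fun _ =>
    ⟨aestronglyMeasurable_const, integrableOn_const measure_Icc_lt_top.ne⟩
  exact ⟨fun _ _ => by simp, integrableOn_zero, hconst x, hconst 0, rfl⟩

section Action

variable {N : ℕ} {T : ℝ} {G : EuclideanSpace ℝ (Fin N) → ℝ}
  {K W V : ℝ → EuclideanSpace ℝ (Fin N) → ℝ} {f : ℝ → EuclideanSpace ℝ (Fin N)}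

lemma IsGFun.action_integrand_le (hG : IsGFun G) {ε k w : ℝ} (hε : 0 < ε)
    {x : EuclideanSpace ℝ (Fin N)} (hw : (3 + ε) * max k (G x) ≤ w)
    (y : EuclideanSpace ℝ (Fin N)) :
    G 0 + (k - w) + ⟪y, x⟫ ≤ fenchel G y - (1 + ε) * G x := by
  have hyx := hG.inner_le_add_fenchel x y
  obtain ⟨-, -, -, hzero, hnonneg, -⟩ := hG
  rw [real_inner_comm] at hyx
  rw [hzero]
  nlinarith [le_max_left k (G x), le_max_right k (G x), hnonneg x]

lemma IsGFun.integrableOn_inner_const (hG : IsGFun G) {s : Set ℝ} (hs : volume s ≠ ⊤)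
    (hfm : AEStronglyMeasurable f (volume.restrict s))
    (hf : IntegrableOn (fun t => fenchel G (f t)) s) (x : EuclideanSpace ℝ (Fin N)) :
    IntegrableOn (fun t => ⟪f t, x⟫) s :=
  ((integrableOn_const (C := G x) hs).add hf).mono' (hfm.inner aestronglyMeasurable_const)
    (ae_of_all _ fun t => by
      rw [Real.norm_eq_abs, real_inner_comm]
      exact hG.abs_inner_le_add_fenchel x (f t))

lemma IsGFun.eventually_action_const_neg (hG : IsGFun G) (hT : 0 < T)
    (hVc : ∀ x, ContinuousOn (fun t => V t x) (Icc (-T) T))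
    (hV : ∀ t x, V t x = K t x - W t x) {ε₀ r : ℝ} (hε₀ : 0 < ε₀)
    (hWbig : ∀ t ∈ Icc (-T) T, ∀ x : EuclideanSpace ℝ (Fin N),
      r < ‖x‖ → (3 + ε₀) * max (K t x) (G x) ≤ W t x)
    (hfm : AEStronglyMeasurable f (volume.restrict (Icc (-T) T)))
    (hf : IntegrableOn (fun t => fenchel G (f t)) (Icc (-T) T)) :
    ∀ᶠ x in cocompact _, ∫ t in (-T)..T, (G 0 + V t x + ⟪f t, x⟫) < 0 := by
  set C := ∫ t in (-T)..T, fenchel G (f t)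
  have hGlim : Tendsto G (cocompact _) atTop := by
    simpa using tendsto_sub_const_mul_norm_of_superlinear hG.2.2.2.2.2 0
  filter_upwards [tendsto_norm_cocompact_atTop.eventually_gt_atTop r,
    hGlim.eventually_gt_atTop (C / ((1 + ε₀) * (2 * T)))] with x hxr hGx
  have hle : ∀ t ∈ Icc (-T) T, G 0 + V t x + ⟪f t, x⟫ ≤ fenchel G (f t) - (1 + ε₀) * G x :=
    fun t ht => hV t x ▸ hG.action_integrand_le hε₀ (hWbig t ht x hxr) (f t)
  have hIcc : uIcc (-T) T = Icc (-T) T := uIcc_of_le (by linarith)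
  have hint : IntervalIntegrable (fun t => G 0 + V t x + ⟪f t, x⟫) volume (-T) T := by
    refine IntegrableOn.intervalIntegrable (hIcc ▸ ?_)
    exact ((integrableOn_const measure_Icc_lt_top.ne).add
      ((hVc x).integrableOn_compact isCompact_Icc)).add
      (hG.integrableOn_inner_const measure_Icc_lt_top.ne hfm hf x)
  have hfen : IntervalIntegrable (fun t => fenchel G (f t)) volume (-T) T :=
    IntegrableOn.intervalIntegrable (hIcc ▸ hf)
  calc ∫ t in (-T)..T, (G 0 + V t x + ⟪f t, x⟫)
      ≤ ∫ t in (-T)..T, (fenchel G (f t) - (1 + ε₀) * G x) :=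
        intervalIntegral.integral_mono_on (by linarith) hint
          (hfen.sub intervalIntegrable_const) hle
    _ = C - (1 + ε₀) * (2 * T) * G x := by
        rw [intervalIntegral.integral_sub hfen intervalIntegrable_const,
          intervalIntegral.integral_const, smul_eq_mul]
        ring
    _ < 0 := by
        rw [div_lt_iff₀ (by positivity)] at hGx
        linarith

end Action

theorem exists_negative_energy_general {N : ℕ} (hN : 0 < N) (T : ℝ) (hT : 0 < T)
    (G : EuclideanSpace ℝ (Fin N) → ℝ) (hG : IsGFun G)
    (K W : ℝ → EuclideanSpace ℝ (Fin N) → ℝ)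
    (hK : ContDiffOn ℝ 1 (fun p : ℝ × EuclideanSpace ℝ (Fin N) => K p.1 p.2)
      (Set.Icc (-T) T ×ˢ Set.univ))
    (hWsm : ContDiffOn ℝ 1 (fun p : ℝ × EuclideanSpace ℝ (Fin N) => W p.1 p.2)
      (Set.Icc (-T) T ×ˢ Set.univ))
    (V : ℝ → EuclideanSpace ℝ (Fin N) → ℝ)
    (hV : ∀ t x, V t x = K t x - W t x)
    (ε₀ r : ℝ) (hε₀ : 0 < ε₀)
    (hWbig : ∀ t ∈ Set.Icc (-T) T, ∀ x : EuclideanSpace ℝ (Fin N),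
      r < ‖x‖ → (3 + ε₀) * max (K t x) (G x) ≤ W t x)
    (f : ℝ → EuclideanSpace ℝ (Fin N))
    (hfm : AEStronglyMeasurable f (volume.restrict (Set.Icc (-T) T)))
    (hf : IntegrableOn (fun t => fenchel G (f t)) (Set.Icc (-T) T)) :
    ∀ ρ > (0 : ℝ), ∃ e e' : ℝ → EuclideanSpace ℝ (Fin N), MemW T G e e' ∧
      ρ < WNorm T G e e' ∧
      (∫ t in (-T)..T, (G (e' t) + V t (e t) + ⟪f t, e t⟫)) < 0 := by
  intro ρ _
  -- makes `cocompact` nontrivial, so that the eventual properties below have a witness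
  have : Nonempty (Fin N) := ⟨⟨0, hN⟩⟩
  have hVc : ∀ x, ContinuousOn (fun t => V t x) (Icc (-T) T) := fun x => by
    simp only [hV]
    exact (hK.continuousOn.uncurry_right x (mem_univ x)).sub
      (hWsm.continuousOn.uncurry_right x (mem_univ x))
  obtain ⟨x, hxρ, hxJ⟩ := (((hG.tendsto_luxNorm_const hT).eventually_gt_atTop ρ).and
    (hG.eventually_action_const_neg hT hVc hV hε₀ hWbig hfm hf)).exists
  exact ⟨fun _ => x, fun _ => 0, memW_const T G x,
    hxρ.trans_le (le_add_of_nonneg_right (luxNorm_nonneg T G _)), hxJ⟩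

/-- Lemma 3.2 of the paper: the action functional is negative at some point
outside any ball. -/
theorem exists_negative_energy {N : ℕ} (hN : 0 < N) (T : ℝ) (hT : 0 < T)
    (G : EuclideanSpace ℝ (Fin N) → ℝ) (hG : IsGFun G)
    (K W : ℝ → EuclideanSpace ℝ (Fin N) → ℝ)
    (hK : ContDiffOn ℝ 1 (fun p : ℝ × EuclideanSpace ℝ (Fin N) => K p.1 p.2)
      (Set.Icc (-T) T ×ˢ Set.univ))
    (hWsm : ContDiffOn ℝ 1 (fun p : ℝ × EuclideanSpace ℝ (Fin N) => W p.1 p.2)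
      (Set.Icc (-T) T ×ˢ Set.univ))
    (V : ℝ → EuclideanSpace ℝ (Fin N) → ℝ)
    (hV : ∀ t x, V t x = K t x - W t x)
    (ε₀ r : ℝ) (hε₀ : 0 < ε₀) (hr : 0 < r)
    (hWbig : ∀ t ∈ Set.Icc (-T) T, ∀ x : EuclideanSpace ℝ (Fin N),
      r < ‖x‖ → (3 + ε₀) * max (K t x) (G x) ≤ W t x)
    (f : ℝ → EuclideanSpace ℝ (Fin N))
    (hfm : AEStronglyMeasurable f (volume.restrict (Set.Icc (-T) T)))
    (hf : IntegrableOn (fun t => fenchel G (f t)) (Set.Icc (-T) T)) :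
    ∀ ρ > (0 : ℝ), ∃ e e' : ℝ → EuclideanSpace ℝ (Fin N), MemW T G e e' ∧
      ρ < WNorm T G e e' ∧
      (∫ t in (-T)..T, (G (e' t) + V t (e t) + ⟪f t, e t⟫)) < 0 :=
  exists_negative_energy_general hN T hT G hG K W hK hWsm V hV ε₀ r hε₀ hWbig f hfm hf
end
end

section
/- Let T > 0 and let G : ℝ^N → [0,∞) be a G-function satisfying the Δ₂ and ∇₂ conditions globally. Let V : [-T,T]×ℝ^N → ℝ be continuous, and assume there exist a ∈ L¹([-T,T],ℝ), b > 1 and ρ₀ > 0 such that V(t,x) ≥ b·G(x) − a(t) whenever |x| ≤ ρ₀. Let f : [-T,T] → ℝ^N be measurable with R_{G*}(f) < ∞. Let C∞ > 0 be a constant such that ess sup_{t∈[-T,T]} |u(t)| ≤ C∞‖u‖_W for every u ∈ W¹_T L^G, set ρ = ρ₀/C∞, and assume R_{G*}(f) + ∫_{-T}^{T} a(t) dt < min{1, b−1}·(ρ/2)^{q_G} in case ρ ≤ 2, and R_{G*}(f) + ∫_{-T}^{T} a(t) dt < min{1, b−1}·(ρ/2)^{p_G} in case ρ > 2. Define J(u)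 = ∫_{-T}^{T} [G(u̇(t)) + V(t,u(t)) + ⟨f(t),u(t)⟩] dt. Then there exists α > 0 such that J(u) ≥ α for every u ∈ W¹_T L^G with ‖u‖_W = ρ. -/
open MeasureTheory Set Filter
open scoped RealInnerProductSpace

noncomputable section

/-!
Convexity and `Δ₂` give `G x ≤ ⟪x, ∇G x⟫ ≤ (K₁ - 1) G x`, so the Simonenko indices are finite,
and differentiating `μ ↦ G (μ • x) μ ^ (-r)` gives `G (l • x) ≥ min (l ^ p_G) (l ^ q_G) G x` for
all `l > 0`. Every `l` below the Luxemburg norm `‖v‖_G` satisfies `∫ G (v / l) > 1`, so letting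
`l ↑ ‖v‖_G` yields `∫ G v ≥ min (‖v‖_G ^ p_G) (‖v‖_G ^ q_G)`.

On the sphere `‖u‖_W = ρ` one of `‖u‖_G`, `‖u̇‖_G` is at least `ρ / 2`. The embedding constant
gives `|u| ≤ ρ₀`, so `V (t, u) ≥ b G (u) - a`, and Fenchel–Young gives
`⟪f, u⟫ ≥ -G* (f) - G (u)`. Hence
`J u ≥ min 1 (b - 1) * min ((ρ/2) ^ p_G) ((ρ/2) ^ q_G) - R_{G*} (f) - ∫ a`, which is positive
by the smallness assumption.
-/

section HilbertSpace

variable {F : Type*} [NormedAddCommGroup F] [InnerProductSpace ℝ F] [CompleteSpace F]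
  {G : F → ℝ}

theorem hasDerivAt_comp_add_smul (hG : Differentiable ℝ G) (y d : F) (t : ℝ) :
    HasDerivAt (fun s : ℝ => G (y + s • d)) ⟪d, gradient G (y + t • d)⟫ t := by
  have hline : HasDerivAt (fun s : ℝ => y + s • d) d t := by
    simpa using ((hasDerivAt_id t).smul_const d).const_add y
  have := (hG _).hasGradientAt.hasFDerivAt.comp_hasDerivAt t hline
  rwa [InnerProductSpace.toDual_apply_apply, real_inner_comm] at this

theorem ConvexOn.add_inner_gradient_le (hconv : ConvexOn ℝ univ G) (hG : Differentiable ℝ G)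
    (y z : F) : G y + ⟪z - y, gradient G y⟫ ≤ G z := by
  have hline : ConvexOn ℝ univ (fun s : ℝ => G (y + s • (z - y))) := by
    have := hconv.comp_affineMap (AffineMap.lineMap y z)
    simp only [Function.comp_def, AffineMap.lineMap_apply_module', add_comm, preimage_univ] at this
    exact this
  have := hline.le_slope_of_hasDerivAt (mem_univ 0) (mem_univ 1) one_pos
    (by simpa only [zero_smul, add_zero] using hasDerivAt_comp_add_smul hG y (z - y) 0)
  simp only [slope_def_field, one_smul, zero_smul, add_zero, add_sub_cancel, sub_zero,
    div_one] at this
  linarith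

theorem ConvexOn.le_inner_gradient_self (hconv : ConvexOn ℝ univ G) (hG : Differentiable ℝ G)
    (h0 : G 0 = 0) (x : F) : G x ≤ ⟪x, gradient G x⟫ := by
  have := hconv.add_inner_gradient_le hG x 0
  rw [h0, zero_sub, inner_neg_left] at this
  linarith

theorem ConvexOn.inner_gradient_self_le (hconv : ConvexOn ℝ univ G) (hG : Differentiable ℝ G)
    {K : ℝ} (hK : ∀ x, G ((2 : ℝ) • x) ≤ K * G x) (x : F) :
    ⟪x, gradient G x⟫ ≤ (K - 1) * G x := by
  have := hconv.add_inner_gradient_le hG x ((2 : ℝ) • x)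
  rw [two_smul, add_sub_cancel_right, ← two_smul ℝ] at this
  linarith [hK x]

theorem hasDerivAt_comp_smul_mul_rpow_neg (hG : Differentiable ℝ G) (x : F) (r : ℝ) {μ : ℝ}
    (hμ : 0 < μ) :
    HasDerivAt (fun s : ℝ => G (s • x) * s ^ (-r))
      (μ ^ (-r - 1) * (⟪μ • x, gradient G (μ • x)⟫ - r * G (μ • x))) μ := by
  have hray : HasDerivAt (fun s : ℝ => G (s • x)) ⟪x, gradient G (μ • x)⟫ μ := by
    simpa using hasDerivAt_comp_add_smul hG 0 x μ
  refine (hray.mul (Real.hasDerivAt_rpow_const (p := -r) (Or.inl hμ.ne'))).congr_deriv ?_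
  have : μ ^ (-r) = μ ^ (-r - 1) * μ := by rw [← Real.rpow_add_one hμ.ne']; ring_nf
  rw [real_inner_smul_left, this]
  ring

theorem antitoneOn_comp_smul_mul_rpow_neg (hG : Differentiable ℝ G) {r : ℝ}
    (hr : ∀ y, ⟪y, gradient G y⟫ ≤ r * G y) (x : F) :
    AntitoneOn (fun s : ℝ => G (s • x) * s ^ (-r)) (Ioi 0) := by
  have hd := fun μ (hμ : μ ∈ Ioi (0 : ℝ)) => hasDerivAt_comp_smul_mul_rpow_neg hG x r hμ
  refine antitoneOn_of_hasDerivWithinAt_nonpos (convex_Ioi 0)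
    (f' := fun μ => μ ^ (-r - 1) * (⟪μ • x, gradient G (μ • x)⟫ - r * G (μ • x)))
    (fun μ hμ => (hd μ hμ).continuousAt.continuousWithinAt) ?_ ?_
  · rw [interior_Ioi]
    exact fun μ hμ => (hd μ hμ).hasDerivWithinAt
  · rw [interior_Ioi]
    exact fun μ hμ => mul_nonpos_of_nonneg_of_nonpos (Real.rpow_nonneg (le_of_lt hμ) _)
      (sub_nonpos.2 (hr _))

theorem monotoneOn_comp_smul_mul_rpow_neg (hG : Differentiable ℝ G) {r : ℝ}
    (hr : ∀ y, r * G y ≤ ⟪y, gradient G y⟫) (x : F) :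
    MonotoneOn (fun s : ℝ => G (s • x) * s ^ (-r)) (Ioi 0) := by
  have hd := fun μ (hμ : μ ∈ Ioi (0 : ℝ)) => hasDerivAt_comp_smul_mul_rpow_neg hG x r hμ
  refine monotoneOn_of_hasDerivWithinAt_nonneg (convex_Ioi 0)
    (f' := fun μ => μ ^ (-r - 1) * (⟪μ • x, gradient G (μ • x)⟫ - r * G (μ • x)))
    (fun μ hμ => (hd μ hμ).continuousAt.continuousWithinAt) ?_ ?_
  · rw [interior_Ioi]
    exact fun μ hμ => (hd μ hμ).hasDerivWithinAt
  · rw [interior_Ioi]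
    exact fun μ hμ => mul_nonneg (Real.rpow_nonneg (le_of_lt hμ) _) (sub_nonneg.2 (hr _))

theorem rpow_mul_le_comp_smul_of_le_one (hG : Differentiable ℝ G) {r : ℝ}
    (hr : ∀ y, ⟪y, gradient G y⟫ ≤ r * G y) (x : F) {l : ℝ} (hl₀ : 0 < l)
    (hl₁ : l ≤ 1) : l ^ r * G x ≤ G (l • x) := by
  have := antitoneOn_comp_smul_mul_rpow_neg hG hr x hl₀ (mem_Ioi.2 one_pos) hl₁
  simp only [one_smul, Real.one_rpow, mul_one, Real.rpow_neg hl₀.le] at this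
  rwa [le_mul_inv_iff₀ (by positivity), mul_comm] at this

theorem comp_smul_le_rpow_mul_of_one_le (hG : Differentiable ℝ G) {r : ℝ}
    (hr : ∀ y, ⟪y, gradient G y⟫ ≤ r * G y) (x : F) {l : ℝ} (hl : 1 ≤ l) :
    G (l • x) ≤ l ^ r * G x := by
  have hl₀ : 0 < l := one_pos.trans_le hl
  have := antitoneOn_comp_smul_mul_rpow_neg hG hr x (mem_Ioi.2 one_pos) hl₀ hl
  simp only [one_smul, Real.one_rpow, mul_one, Real.rpow_neg hl₀.le] at this
  rwa [mul_inv_le_iff₀ (by positivity), mul_comm] at this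

theorem rpow_mul_le_comp_smul_of_one_le (hG : Differentiable ℝ G) {r : ℝ}
    (hr : ∀ y, r * G y ≤ ⟪y, gradient G y⟫) (x : F) {l : ℝ} (hl : 1 ≤ l) :
    l ^ r * G x ≤ G (l • x) := by
  have hl₀ : 0 < l := one_pos.trans_le hl
  have := monotoneOn_comp_smul_mul_rpow_neg hG hr x (mem_Ioi.2 one_pos) hl₀ hl
  simp only [one_smul, Real.one_rpow, mul_one, Real.rpow_neg hl₀.le] at this
  rwa [le_mul_inv_iff₀ (by positivity), mul_comm] at this

theorem pos_of_inner_gradient_le (hG : Differentiable ℝ G) (hnonneg : ∀ x, 0 ≤ G x) {r : ℝ}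
    (hr : ∀ y, ⟪y, gradient G y⟫ ≤ r * G y)
    (hcoer : Tendsto (fun x => G x / ‖x‖) (cocompact F) atTop) {x : F} (hx : x ≠ 0) :
    0 < G x := by
  refine (hnonneg x).lt_of_ne fun hx0 => ?_
  have hray : Tendsto (fun l : ℝ => l • x) atTop (cocompact F) := by
    refine tendsto_cocompact_of_tendsto_dist_comp_atTop 0 ?_
    simp only [dist_zero_right, norm_smul, Real.norm_eq_abs]
    exact tendsto_abs_atTop_atTop.atTop_mul_const (norm_pos_iff.2 hx)
  obtain ⟨l, hl₁, hl⟩ :=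
    ((eventually_ge_atTop 1).and ((hcoer.comp hray).eventually_gt_atTop 0)).exists
  have : G (l • x) = 0 := le_antisymm
    (by simpa [← hx0] using comp_smul_le_rpow_mul_of_one_le hG hr x hl₁) (hnonneg _)
  simp [this] at hl

end HilbertSpace

theorem bddAbove_inner_sub_of_tendsto {F : Type*} [NormedAddCommGroup F] [InnerProductSpace ℝ F]
    [ProperSpace F] {G : F → ℝ} (hGc : Continuous G)
    (hcoer : Tendsto (fun x => G x / ‖x‖) (cocompact F) atTop) (y : F) :
    BddAbove {r : ℝ | ∃ x, r = ⟪x, y⟫ - G x} := by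
  have hlim : Tendsto (fun x => G x - ⟪x, y⟫) (cocompact F) atTop := by
    refine tendsto_atTop_mono' _ ?_ tendsto_norm_cocompact_atTop
    filter_upwards [hcoer.eventually_ge_atTop (‖y‖ + 1),
      tendsto_norm_cocompact_atTop.eventually_gt_atTop 0] with x hGx hx
    rw [le_div_iff₀ hx] at hGx
    nlinarith [real_inner_le_norm x y]
  obtain ⟨x₀, hx₀⟩ :=
    (show Continuous fun x => G x - ⟪x, y⟫ by fun_prop).exists_forall_le hlim
  exact ⟨⟪x₀, y⟫ - G x₀, by rintro _ ⟨x, rfl⟩; linarith [hx₀ x]⟩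

section Orlicz

variable {N : ℕ} {T : ℝ} {G : EuclideanSpace ℝ (Fin N) → ℝ}

local notation "E" => EuclideanSpace ℝ (Fin N)

namespace IsGFun

variable (hG : IsGFun G)
include hG

theorem differentiable : Differentiable ℝ G := hG.1.differentiable one_ne_zero

theorem convexOn : ConvexOn ℝ univ G := hG.2.1

theorem nonneg (x : E) : 0 ≤ G x := hG.2.2.2.2.1 x

theorem apply_zero : G 0 = 0 := hG.2.2.2.1

theorem apply_neg (x : E) : G (-x) = G x := hG.2.2.1 x

theorem tendsto_div_norm : Tendsto (fun x => G x / ‖x‖) (cocompact _) atTop := hG.2.2.2.2.2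

theorem exists_inner_gradient_le (hΔ : Delta2Global G) :
    ∃ r, ∀ x, ⟪x, gradient G x⟫ ≤ r * G x :=
  let ⟨K, _, hK⟩ := hΔ
  ⟨K - 1, hG.convexOn.inner_gradient_self_le hG.differentiable hK⟩

theorem pos (hΔ : Delta2Global G) {x : E} (hx : x ≠ 0) : 0 < G x :=
  let ⟨_, hr⟩ := hG.exists_inner_gradient_le hΔ
  pos_of_inner_gradient_le hG.differentiable hG.nonneg hr hG.tendsto_div_norm hx

theorem inner_gradient_div_nonneg (x : E) : 0 ≤ ⟪x, gradient G x⟫ / G x :=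
  div_nonneg ((hG.nonneg x).trans
    (hG.convexOn.le_inner_gradient_self hG.differentiable hG.apply_zero x)) (hG.nonneg x)

theorem bddAbove_inner_gradient_div (hΔ : Delta2Global G) :
    BddAbove {r : ℝ | ∃ x, x ≠ 0 ∧ r = ⟪x, gradient G x⟫ / G x} := by
  obtain ⟨r, hr⟩ := hG.exists_inner_gradient_le hΔ
  exact ⟨r, by rintro _ ⟨x, hx, rfl⟩; exact (div_le_iff₀ (hG.pos hΔ hx)).2 (hr x)⟩

theorem simonP_mul_le (hΔ : Delta2Global G) (x : E) :
    simonP G * G x ≤ ⟪x, gradient G x⟫ := by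
  rcases eq_or_ne x 0 with rfl | hx
  · simp [hG.apply_zero]
  refine (le_div_iff₀ (hG.pos hΔ hx)).1 (csInf_le ?_ ⟨x, hx, rfl⟩)
  exact ⟨0, by rintro _ ⟨y, -, rfl⟩; exact hG.inner_gradient_div_nonneg y⟩

theorem inner_gradient_le_simonQ_mul (hΔ : Delta2Global G) (x : E) :
    ⟪x, gradient G x⟫ ≤ simonQ G * G x := by
  rcases eq_or_ne x 0 with rfl | hx
  · simp [hG.apply_zero]
  exact (div_le_iff₀ (hG.pos hΔ hx)).1
    (le_csSup (hG.bddAbove_inner_gradient_div hΔ) ⟨x, hx, rfl⟩)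

theorem simonP_nonneg : 0 ≤ simonP G :=
  Real.sInf_nonneg (by rintro _ ⟨x, -, rfl⟩; exact hG.inner_gradient_div_nonneg x)

theorem simonP_le_simonQ (hΔ : Delta2Global G) : simonP G ≤ simonQ G :=
  Real.sInf_le_sSup _ ⟨0, by rintro _ ⟨x, -, rfl⟩; exact hG.inner_gradient_div_nonneg x⟩
    (hG.bddAbove_inner_gradient_div hΔ)

theorem min_rpow_mul_le (hΔ : Delta2Global G) {l : ℝ} (hl : 0 < l) (x : E) :
    min (l ^ simonP G) (l ^ simonQ G) * G x ≤ G (l • x) := by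
  rcases le_total l 1 with hl₁ | hl₁
  · exact (mul_le_mul_of_nonneg_right (min_le_right _ _) (hG.nonneg x)).trans
      (rpow_mul_le_comp_smul_of_le_one hG.differentiable (hG.inner_gradient_le_simonQ_mul hΔ)
        x hl hl₁)
  · exact (mul_le_mul_of_nonneg_right (min_le_left _ _) (hG.nonneg x)).trans
      (rpow_mul_le_comp_smul_of_one_le hG.differentiable (hG.simonP_mul_le hΔ) x hl₁)

theorem inner_sub_le_fenchel (x y : E) : ⟪x, y⟫ - G x ≤ fenchel G y :=
  le_csSup (bddAbove_inner_sub_of_tendsto hG.differentiable.continuous hG.tendsto_div_norm y)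
    ⟨x, rfl⟩

theorem abs_inner_le_fenchel_add (x y : E) : |⟪y, x⟫| ≤ fenchel G y + G x := by
  have h₁ := hG.inner_sub_le_fenchel x y
  have h₂ := hG.inner_sub_le_fenchel (-x) y
  rw [inner_neg_left, hG.apply_neg] at h₂
  rw [real_inner_comm, abs_le]
  constructor <;> linarith

end IsGFun

theorem one_lt_integral_of_lt_luxNorm {v : ℝ → E} {l : ℝ} (hl : 0 < l)
    (hlv : l < luxNorm T G v) : 1 < ∫ t in (-T)..T, G (l⁻¹ • v t) := by
  by_contra! h
  exact hlv.not_ge (csInf_le ⟨0, fun _ hm => hm.1.le⟩ ⟨hl, h⟩)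

theorem le_integral_of_lt_luxNorm (hT : -T ≤ T) {v : ℝ → E}
    (hv : IntervalIntegrable (fun t => G (v t)) volume (-T) T) {l c : ℝ} (hl : 0 < l)
    (hlv : l < luxNorm T G v) (hc : 0 ≤ c) (hscale : ∀ x, c * G x ≤ G (l • x)) :
    c ≤ ∫ t in (-T)..T, G (v t) := by
  have hgt := one_lt_integral_of_lt_luxNorm hl hlv
  -- integrable because its integral is nonzero: a non-integrable function integrates to `0`
  have hint : IntervalIntegrable (fun t => G (l⁻¹ • v t)) volume (-T) T :=
    intervalIntegral.intervalIntegrable_of_integral_ne_zero (by linarith)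
  calc c ≤ c * ∫ t in (-T)..T, G (l⁻¹ • v t) := le_mul_of_one_le_right hc hgt.le
    _ = ∫ t in (-T)..T, c * G (l⁻¹ • v t) := (intervalIntegral.integral_const_mul _ _).symm
    _ ≤ ∫ t in (-T)..T, G (v t) := intervalIntegral.integral_mono_on hT (hint.const_mul c) hv
        fun t _ => by simpa [smul_smul, hl.ne'] using hscale (l⁻¹ • v t)

theorem IsGFun.min_rpow_le_integral (hG : IsGFun G) (hΔ : Delta2Global G) (hT : -T ≤ T)
    {v : ℝ → E} (hv : MemLG T G v) {r : ℝ} (hr : 0 < r) (hrv : r ≤ luxNorm T G v) :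
    min (r ^ simonP G) (r ^ simonQ G) ≤ ∫ t in (-T)..T, G (v t) := by
  set s := luxNorm T G v
  have hs : 0 < s := hr.trans_le hrv
  have hp := hG.simonP_nonneg
  have hq := hp.trans (hG.simonP_le_simonQ hΔ)
  have hcont : ContinuousAt (fun l : ℝ => min (l ^ simonP G) (l ^ simonQ G)) s :=
    (Real.continuousAt_rpow_const _ _ (Or.inl hs.ne')).min
      (Real.continuousAt_rpow_const _ _ (Or.inl hs.ne'))
  have hs_le : min (s ^ simonP G) (s ^ simonQ G) ≤ ∫ t in (-T)..T, G (v t) := by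
    refine le_of_tendsto (hcont.tendsto.mono_left (nhdsWithin_le_nhds (s := Iio s))) ?_
    filter_upwards [Ioo_mem_nhdsLT hs] with l hl
    exact le_integral_of_lt_luxNorm hT ((intervalIntegrable_iff_integrableOn_Icc_of_le hT).2 hv.2)
      hl.1 hl.2 (le_min (Real.rpow_nonneg hl.1.le _) (Real.rpow_nonneg hl.1.le _))
      (hG.min_rpow_mul_le hΔ hl.1)
  exact (min_le_min (Real.rpow_le_rpow hr.le hrv hp) (Real.rpow_le_rpow hr.le hrv hq)).trans hs_le

end Orlicz

section Action

variable {N : ℕ} {T : ℝ} {G : EuclideanSpace ℝ (Fin N) → ℝ}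

local notation "E" => EuclideanSpace ℝ (Fin N)

theorem MemW.continuousOn {u u' : ℝ → E} (hu : MemW T G u u') (hT : -T ≤ T) :
    ContinuousOn u (Icc (-T) T) := by
  have hu' : IntervalIntegrable u' volume (-T) T :=
    (intervalIntegrable_iff_integrableOn_Icc_of_le hT).2 hu.2.1
  have hprim := intervalIntegral.continuousOn_primitive_interval' hu' left_mem_uIcc
  rw [uIcc_of_le hT] at hprim
  exact (continuousOn_const.add hprim).congr hu.1

theorem integral_sub_le_integral_action (hT : -T ≤ T) (hG : IsGFun G) {V : ℝ → E → ℝ}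
    (hVc : ContinuousOn (fun p : ℝ × E => V p.1 p.2) (Icc (-T) T ×ˢ univ)) {a : ℝ → ℝ}
    (ha : IntegrableOn a (Icc (-T) T)) {b ρ₀ : ℝ}
    (hV : ∀ t ∈ Icc (-T) T, ∀ x : E, ‖x‖ ≤ ρ₀ → b * G x - a t ≤ V t x)
    {f : ℝ → E} (hfm : AEStronglyMeasurable f (volume.restrict (Icc (-T) T)))
    (hf : IntegrableOn (fun t => fenchel G (f t)) (Icc (-T) T))
    {u u' : ℝ → E} (hu : MemW T G u u') (hbound : ∀ t ∈ Icc (-T) T, ‖u t‖ ≤ ρ₀) :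
    (∫ t in (-T)..T, G (u' t)) + (b - 1) * (∫ t in (-T)..T, G (u t))
        - ((∫ t in (-T)..T, fenchel G (f t)) + ∫ t in (-T)..T, a t)
      ≤ ∫ t in (-T)..T, (G (u' t) + V t (u t) + ⟪f t, u t⟫) := by
  have ii := fun {g : ℝ → ℝ} (hg : IntegrableOn g (Icc (-T) T)) =>
    (intervalIntegrable_iff_integrableOn_Icc_of_le hT).2 hg
  have hucont := hu.continuousOn hT
  obtain ⟨-, -, ⟨hum, huG⟩, ⟨-, hu'G⟩, -⟩ := hu
  have hVu : IntegrableOn (fun t => V t (u t)) (Icc (-T) T) :=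
    (hVc.comp (continuousOn_id.prodMk hucont)
      fun t ht => ⟨ht, mem_univ _⟩).integrableOn_Icc
  have hfu : IntegrableOn (fun t => ⟪f t, u t⟫) (Icc (-T) T) :=
    (hf.add huG).mono' (hfm.inner hum)
      (ae_of_all _ fun t => hG.abs_inner_le_fenchel_add (u t) (f t))
  rw [← intervalIntegral.integral_const_mul, ← intervalIntegral.integral_add (ii hu'G)
    ((ii huG).const_mul _), ← intervalIntegral.integral_add (ii hf) (ii ha),
    ← intervalIntegral.integral_sub ((ii hu'G).add ((ii huG).const_mul _)) ((ii hf).add (ii ha))]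
  refine intervalIntegral.integral_mono_on hT
    (((ii hu'G).add ((ii huG).const_mul _)).sub ((ii hf).add (ii ha)))
    (((ii hu'G).add (ii hVu)).add (ii hfu)) fun t ht => ?_
  have hfy : -(fenchel G (f t) + G (u t)) ≤ ⟪f t, u t⟫ :=
    (neg_le_neg (hG.abs_inner_le_fenchel_add (u t) (f t))).trans (neg_abs_le _)
  linarith [hV t ht (u t) (hbound t ht)]

theorem IsGFun.min_mul_min_rpow_le_of_wNorm_eq (hG : IsGFun G) (hΔ : Delta2Global G)
    (hT : -T ≤ T) {u u' : ℝ → E} (hu : MemW T G u u') {ρ b : ℝ} (hρ : 0 < ρ)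
    (hnorm : WNorm T G u u' = ρ) (hb : 1 ≤ b) :
    min 1 (b - 1) * min ((ρ / 2) ^ simonP G) ((ρ / 2) ^ simonQ G)
      ≤ (∫ t in (-T)..T, G (u' t)) + (b - 1) * ∫ t in (-T)..T, G (u t) := by
  obtain ⟨-, -, huLG, hu'LG, -⟩ := hu
  have hGu : 0 ≤ ∫ t in (-T)..T, G (u t) :=
    intervalIntegral.integral_nonneg hT fun t _ => hG.nonneg (u t)
  have hGu' : 0 ≤ ∫ t in (-T)..T, G (u' t) :=
    intervalIntegral.integral_nonneg hT fun t _ => hG.nonneg (u' t)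
  have hmod : min ((ρ / 2) ^ simonP G) ((ρ / 2) ^ simonQ G)
      ≤ (∫ t in (-T)..T, G (u t)) + ∫ t in (-T)..T, G (u' t) := by
    rw [WNorm] at hnorm
    rcases le_or_gt (ρ / 2) (luxNorm T G u) with h | h
    · exact (hG.min_rpow_le_integral hΔ hT huLG (half_pos hρ) h).trans
        (le_add_of_nonneg_right hGu')
    · exact (hG.min_rpow_le_integral hΔ hT hu'LG (half_pos hρ) (by linarith)).trans
        (le_add_of_nonneg_left hGu)
  have h₁ : min 1 (b - 1) * (∫ t in (-T)..T, G (u' t)) ≤ ∫ t in (-T)..T, G (u' t) :=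
    mul_le_of_le_one_left hGu' (min_le_left _ _)
  have h₂ : min 1 (b - 1) * (∫ t in (-T)..T, G (u t)) ≤ (b - 1) * ∫ t in (-T)..T, G (u t) :=
    mul_le_mul_of_nonneg_right (min_le_right _ _) hGu
  nlinarith [mul_le_mul_of_nonneg_left hmod (le_min zero_le_one (sub_nonneg.2 hb))]

end Action

theorem mountain_pass_geometry_global_general {N : ℕ} (T : ℝ) (hT : 0 < T)
    (G : EuclideanSpace ℝ (Fin N) → ℝ) (hG : IsGFun G)
    (hDel2 : Delta2Global G)
    (V : ℝ → EuclideanSpace ℝ (Fin N) → ℝ)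
    (hVc : ContinuousOn (fun p : ℝ × EuclideanSpace ℝ (Fin N) => V p.1 p.2)
      (Set.Icc (-T) T ×ˢ Set.univ))
    (a : ℝ → ℝ) (ha : IntegrableOn a (Set.Icc (-T) T)) (b : ℝ) (hb : 1 < b)
    (ρ₀ : ℝ) (hρ₀ : 0 < ρ₀)
    (hA3 : ∀ t ∈ Set.Icc (-T) T, ∀ x : EuclideanSpace ℝ (Fin N),
      ‖x‖ ≤ ρ₀ → b * G x - a t ≤ V t x)
    (f : ℝ → EuclideanSpace ℝ (Fin N))
    (hfm : AEStronglyMeasurable f (volume.restrict (Set.Icc (-T) T)))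
    (hf : IntegrableOn (fun t => fenchel G (f t)) (Set.Icc (-T) T))
    (Cinf : ℝ) (hCinf : 0 < Cinf)
    (hemb : ∀ u u' : ℝ → EuclideanSpace ℝ (Fin N), MemW T G u u' →
      ∀ t ∈ Set.Icc (-T) T, ‖u t‖ ≤ Cinf * WNorm T G u u')
    (ρ : ℝ) (hρ : ρ = ρ₀ / Cinf)
    (hsmall₁ : ρ ≤ 2 →
      (∫ t in (-T)..T, fenchel G (f t)) + ∫ t in (-T)..T, a t
        < min 1 (b - 1) * (ρ / 2) ^ simonQ G)
    (hsmall₂ : 2 < ρ →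
      (∫ t in (-T)..T, fenchel G (f t)) + ∫ t in (-T)..T, a t
        < min 1 (b - 1) * (ρ / 2) ^ simonP G) :
    ∃ α > (0 : ℝ), ∀ u u' : ℝ → EuclideanSpace ℝ (Fin N), MemW T G u u' →
      WNorm T G u u' = ρ →
      α ≤ ∫ t in (-T)..T, (G (u' t) + V t (u t) + ⟪f t, u t⟫) := by
  have hTle : -T ≤ T := by linarith
  have hρpos : 0 < ρ := hρ ▸ div_pos hρ₀ hCinf
  have hpq := hG.simonP_le_simonQ hDel2
  have hsmall : (∫ t in (-T)..T, fenchel G (f t)) + (∫ t in (-T)..T, a t)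
      < min 1 (b - 1) * min ((ρ / 2) ^ simonP G) ((ρ / 2) ^ simonQ G) := by
    rcases le_or_gt ρ 2 with h | h
    · rw [min_eq_right (Real.rpow_le_rpow_of_exponent_ge (half_pos hρpos) (by linarith) hpq)]
      exact hsmall₁ h
    · rw [min_eq_left (Real.rpow_le_rpow_of_exponent_le (by linarith) hpq)]
      exact hsmall₂ h
  refine ⟨_, sub_pos.2 hsmall, fun u u' hu hnorm => ?_⟩
  have hbound : ∀ t ∈ Icc (-T) T, ‖u t‖ ≤ ρ₀ := fun t ht => by
    simpa [hnorm, hρ, mul_div_cancel₀ _ hCinf.ne'] using hemb u u' hu t ht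
  have hmod := hG.min_mul_min_rpow_le_of_wNorm_eq hDel2 hTle hu hρpos hnorm hb.le
  have hJ := integral_sub_le_integral_action hTle hG hVc ha hA3 hfm hf hu hbound
  linarith

/-- Lemma 3.3 of the paper (case of Theorem 1.1): the action functional is
bounded below by a positive constant on the sphere of radius ρ. -/
theorem mountain_pass_geometry_global {N : ℕ} (T : ℝ) (hT : 0 < T)
    (G : EuclideanSpace ℝ (Fin N) → ℝ) (hG : IsGFun G)
    (hDel2 : Delta2Global G) (hNab2 : Nabla2Global G)
    (V : ℝ → EuclideanSpace ℝ (Fin N) → ℝ)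
    (hVc : ContinuousOn (fun p : ℝ × EuclideanSpace ℝ (Fin N) => V p.1 p.2)
      (Set.Icc (-T) T ×ˢ Set.univ))
    (a : ℝ → ℝ) (ha : IntegrableOn a (Set.Icc (-T) T)) (b : ℝ) (hb : 1 < b)
    (ρ₀ : ℝ) (hρ₀ : 0 < ρ₀)
    (hA3 : ∀ t ∈ Set.Icc (-T) T, ∀ x : EuclideanSpace ℝ (Fin N),
      ‖x‖ ≤ ρ₀ → b * G x - a t ≤ V t x)
    (f : ℝ → EuclideanSpace ℝ (Fin N))
    (hfm : AEStronglyMeasurable f (volume.restrict (Set.Icc (-T) T)))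
    (hf : IntegrableOn (fun t => fenchel G (f t)) (Set.Icc (-T) T))
    (Cinf : ℝ) (hCinf : 0 < Cinf)
    (hemb : ∀ u u' : ℝ → EuclideanSpace ℝ (Fin N), MemW T G u u' →
      ∀ t ∈ Set.Icc (-T) T, ‖u t‖ ≤ Cinf * WNorm T G u u')
    (ρ : ℝ) (hρ : ρ = ρ₀ / Cinf)
    (hsmall₁ : ρ ≤ 2 →
      (∫ t in (-T)..T, fenchel G (f t)) + ∫ t in (-T)..T, a t
        < min 1 (b - 1) * (ρ / 2) ^ simonQ G)
    (hsmall₂ : 2 < ρ →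
      (∫ t in (-T)..T, fenchel G (f t)) + ∫ t in (-T)..T, a t
        < min 1 (b - 1) * (ρ / 2) ^ simonP G) :
    ∃ α > (0 : ℝ), ∀ u u' : ℝ → EuclideanSpace ℝ (Fin N), MemW T G u u' →
      WNorm T G u u' = ρ →
      α ≤ ∫ t in (-T)..T, (G (u' t) + V t (u t) + ⟪f t, u t⟫) :=
  mountain_pass_geometry_global_general T hT G hG hDel2 V hVc a ha b hb ρ₀ hρ₀ hA3 f hfm hf Cinf
    hCinf hemb ρ hρ hsmall₁ hsmall₂
end
end

section
/- Let T > 0, let G : ℝ^N → [0,∞) be a G-function, let V : [-T,T]×ℝ^N → ℝ be C¹, and let u : [-T,T] → ℝ^N be absolutely continuous with derivative u̇. Suppose there exists c ∈ ℝ^N such that ∇G(u̇(t)) = c + ∫_{-T}^{t} V_x(s, u(s)) ds for a.e. t ∈ [-T,T]. Then u̇ is essentially bounded: there exists M > 0 with |u̇(t)| ≤ M for a.e. t ∈ [-T,T]. -/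
open MeasureTheory Set Filter
open scoped RealInnerProductSpace

noncomputable section

/-!
The right-hand side `c + ∫_{-T}^t V_x(s, u(s)) ds` is bounded on `[-T, T]`, since `u` is
continuous and `V` is `C¹` up to the boundary, so `V_x(·, u(·))` is continuous on the compact
interval. On the other hand `∇G` is coercive: convexity and `G 0 = 0` give
`G x ≤ ⟪∇G x, x⟫ ≤ ‖∇G x‖ ‖x‖`, and `G` grows superlinearly. Hence `∇G (u̇ t)` can only stay
bounded if `u̇ t` does.
-/

theorem HasFDerivWithinAt.hasFDerivAt_prod_univ_right
    {𝕜 : Type*} [NontriviallyNormedField 𝕜]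
    {E F H : Type*} [NormedAddCommGroup E] [NormedSpace 𝕜 E] [NormedAddCommGroup F]
    [NormedSpace 𝕜 F] [NormedAddCommGroup H] [NormedSpace 𝕜 H]
    {f : F × E → H} {f' : F × E →L[𝕜] H} {S : Set F} {s : F} {x : E} (hs : s ∈ S)
    (hf : HasFDerivWithinAt f f' (S ×ˢ univ) (s, x)) :
    HasFDerivAt (fun y => f (s, y)) (f'.comp (ContinuousLinearMap.inr 𝕜 F E)) x := by
  rw [← hasFDerivWithinAt_univ]
  exact hf.comp x (hasFDerivAt_prodMk_right s x).hasFDerivWithinAt fun y _ => ⟨hs, mem_univ y⟩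

theorem intervalIntegral.norm_integral_le_integral_norm_of_mem_Icc
    {E : Type*} [NormedAddCommGroup E] [NormedSpace ℝ E]
    {g : ℝ → E} {a b t : ℝ} (hg : IntervalIntegrable g volume a b) (ht : t ∈ Icc a b) :
    ‖∫ s in a..t, g s‖ ≤ ∫ s in a..b, ‖g s‖ :=
  (norm_integral_le_integral_norm ht.1).trans <|
    integral_mono_interval le_rfl ht.1 ht.2 (.of_forall fun _ => norm_nonneg _) hg.norm

section InnerProductSpace

variable {E : Type*} [NormedAddCommGroup E] [InnerProductSpace ℝ E] [CompleteSpace E]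

theorem ConvexOn.sub_le_inner_of_hasGradientAt {f : E → ℝ} {f' x : E}
    (hf : ConvexOn ℝ univ f) (hf' : HasGradientAt f f' x) (y : E) :
    f x - f y ≤ ⟪f', x - y⟫ := by
  have hline : ConvexOn ℝ univ (f ∘ AffineMap.lineMap (k := ℝ) y x) := by
    simpa using hf.comp_affineMap (AffineMap.lineMap (k := ℝ) y x)
  have hderiv : HasDerivAt (f ∘ AffineMap.lineMap (k := ℝ) y x) ⟪f', x - y⟫ 1 := by
    have hx : AffineMap.lineMap y x (1 : ℝ) = x := AffineMap.lineMap_apply_one y x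
    simpa using (hx ▸ hf'.hasFDerivAt).comp_hasDerivAt 1 AffineMap.hasDerivAt_lineMap
  simpa [slope_def_field] using
    hline.slope_le_of_hasDerivAt (mem_univ 0) (mem_univ 1) zero_lt_one hderiv

theorem ConvexOn.tendsto_norm_gradient_cobounded {f : E → ℝ}
    (hf : ConvexOn ℝ univ f) (hdiff : Differentiable ℝ f) (h0 : f 0 = 0)
    (hsup : Tendsto (fun x => f x / ‖x‖) (cocompact E) atTop) :
    Tendsto (fun x => ‖gradient f x‖) (Bornology.cobounded E) atTop := by
  refine tendsto_atTop.2 fun R => ?_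
  have hpos : ∀ᶠ x in Bornology.cobounded E, 0 < ‖x‖ :=
    tendsto_norm_cobounded_atTop.eventually_gt_atTop 0
  filter_upwards [tendsto_atTop.1 (hsup.mono_left Metric.cobounded_le_cocompact) R, hpos]
    with x hR hx
  have hinner : f x ≤ ⟪gradient f x, x⟫ := by
    simpa [h0] using hf.sub_le_inner_of_hasGradientAt (hdiff x).hasGradientAt 0
  calc R ≤ f x / ‖x‖ := hR
    _ ≤ ‖gradient f x‖ * ‖x‖ / ‖x‖ := by
        gcongr; exact hinner.trans (real_inner_le_norm _ _)
    _ = ‖gradient f x‖ := by field_simp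

theorem ContDiffOn.continuousOn_gradient_comp {F : Type*} [NormedAddCommGroup F]
    [NormedSpace ℝ F] {V : F → E → ℝ} {S : Set F}
    (hV : ContDiffOn ℝ 1 (fun p : F × E => V p.1 p.2) (S ×ˢ univ)) (hS : UniqueDiffOn ℝ S)
    {γ : F → E} (hγ : ContinuousOn γ S) :
    ContinuousOn (fun s => gradient (V s) (γ s)) S := by
  set D := fderivWithin ℝ (fun p : F × E => V p.1 p.2) (S ×ˢ univ)
  have hgrad : ∀ s ∈ S, ∀ x, gradient (V s) x =
      (InnerProductSpace.toDual ℝ E).symm ((D (s, x)).comp (ContinuousLinearMap.inr ℝ F E)) :=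
    fun s hs x => ((hV.differentiableOn one_ne_zero (s, x) ⟨hs, mem_univ x⟩).hasFDerivWithinAt
      |>.hasFDerivAt_prod_univ_right hs |>.hasGradientAt).gradient
  have hD : ContinuousOn D (S ×ˢ univ) :=
    hV.continuousOn_fderivWithin (hS.prod uniqueDiffOn_univ) le_rfl
  have hcomp : Continuous fun L : F × E →L[ℝ] ℝ => L.comp (ContinuousLinearMap.inr ℝ F E) :=
    ((ContinuousLinearMap.compL ℝ E (F × E) ℝ).flip (ContinuousLinearMap.inr ℝ F E)).continuous
  refine ContinuousOn.congr ?_ fun s hs => hgrad s hs (γ s)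
  exact (InnerProductSpace.toDual ℝ E).symm.continuous.comp_continuousOn <|
    hcomp.comp_continuousOn <| hD.comp (continuousOn_id.prodMk hγ) fun s hs => ⟨hs, mem_univ _⟩

end InnerProductSpace

/-- Proposition 3.2 of the paper: any solution of the Euler–Lagrange equation
has essentially bounded derivative. -/
theorem solution_deriv_bounded {N : ℕ} (T : ℝ) (hT : 0 < T)
    (G : EuclideanSpace ℝ (Fin N) → ℝ) (hG : IsGFun G)
    (V : ℝ → EuclideanSpace ℝ (Fin N) → ℝ)
    (hV : ContDiffOn ℝ 1 (fun p : ℝ × EuclideanSpace ℝ (Fin N) => V p.1 p.2)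
      (Set.Icc (-T) T ×ˢ Set.univ))
    (u u' : ℝ → EuclideanSpace ℝ (Fin N))
    (hAC : ∀ t ∈ Set.Icc (-T) T, u t = u (-T) + ∫ s in (-T)..t, u' s)
    (hint : IntegrableOn u' (Set.Icc (-T) T))
    (c : EuclideanSpace ℝ (Fin N))
    (heq : ∀ᵐ t ∂(volume.restrict (Set.Icc (-T) T)),
      gradient G (u' t) = c + ∫ s in (-T)..t, gradient (V s) (u s)) :
    ∃ M > (0 : ℝ), ∀ᵐ t ∂(volume.restrict (Set.Icc (-T) T)), ‖u' t‖ ≤ M := by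
  obtain ⟨hGdiff, hGconv, -, hG0, -, hGsup⟩ := hG
  have hTT : -T ≤ T := by linarith
  have hu : ContinuousOn u (Icc (-T) T) := by
    have hprim := intervalIntegral.continuousOn_primitive_interval'
      ((intervalIntegrable_iff_integrableOn_Icc_of_le hTT).2 hint) left_mem_uIcc
    rw [uIcc_of_le hTT] at hprim
    exact (continuousOn_const.add hprim).congr hAC
  have hVx : ContinuousOn (fun s => gradient (V s) (u s)) (Icc (-T) T) :=
    hV.continuousOn_gradient_comp (uniqueDiffOn_Icc (by linarith)) hu
  set C := ∫ s in (-T)..T, ‖gradient (V s) (u s)‖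
  have hsublevel : Bornology.IsBounded {x | ‖gradient G x‖ ≤ ‖c‖ + C} :=
    Bornology.isBounded_def.2 <| ((hGconv.tendsto_norm_gradient_cobounded
      (hGdiff.differentiable one_ne_zero) hG0 hGsup).eventually_gt_atTop _).mono fun _ => not_le.2
  obtain ⟨M, hM⟩ := isBounded_iff_forall_norm_le.1 hsublevel
  refine ⟨max M 1, by positivity, ?_⟩
  filter_upwards [heq, ae_restrict_mem measurableSet_Icc] with t ht htT
  refine (hM (u' t) ?_).trans (le_max_left _ _)
  calc ‖gradient G (u' t)‖ ≤ ‖c‖ + ‖∫ s in (-T)..t, gradient (V s) (u s)‖ :=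
        ht ▸ norm_add_le _ _
    _ ≤ ‖c‖ + C := by
        gcongr
        exact intervalIntegral.norm_integral_le_integral_norm_of_mem_Icc
          (hVx.intervalIntegrable_of_Icc hTT) htT
end
end

section
/- Let G : ℝ^N → [0,∞) be a G-function satisfying the Δ₂ condition globally with constant K₁ > 2 (G(2x) ≤ K₁G(x) for all x) and the ∇₂ condition globally with constant K₂ > 1 (G(x) ≤ (1/(2K₂))G(K₂x) for all x). Then for every x ∈ ℝ^N, (2K₂/(2K₂ − 1))·G(x) ≤ ⟨x, ∇G(x)⟩ ≤ K₁·G(x). -/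
open MeasureTheory Set Filter
open scoped RealInnerProductSpace

noncomputable section

/-! The convexity inequality `G(y) ≥ G(x) + ⟨y - x, ∇G(x)⟩`, applied at `y = 2x` and at
`y = x / K₂`, turns the Δ₂ and ∇₂ conditions into the upper and lower bounds on the radial
derivative `⟨x, ∇G(x)⟩`. -/

section ConvexGradient

variable {E : Type*}

theorem ConvexOn.add_fderiv_sub_le [NormedAddCommGroup E] [NormedSpace ℝ E] {s : Set E}
    {f : E → ℝ} {f' : E →L[ℝ] ℝ} {x y : E} (hf : ConvexOn ℝ s f) (hx : x ∈ s) (hy : y ∈ s)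
    (hf' : HasFDerivAt f f' x) : f x + f' (y - x) ≤ f y := by
  set φ : ℝ → ℝ := fun t => f (x + t • (y - x))
  have hφ_eq : f ∘ AffineMap.lineMap x y = φ := by
    funext t
    simp only [Function.comp_apply, AffineMap.lineMap_apply_module, φ]
    congr 1
    module
  have hφ_convex : ConvexOn ℝ (Icc 0 1) φ := by
    refine hφ_eq ▸ (hf.comp_affineMap (AffineMap.lineMap x y)).subset ?_ (convex_Icc 0 1)
    exact fun t ht => hf.1.lineMap_mem hx hy ht
  have hφ_deriv : HasDerivAt φ (f' (y - x)) 0 := by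
    have hline : HasDerivAt (fun t : ℝ => x + t • (y - x)) (y - x) 0 := by
      simpa using ((hasDerivAt_id (0 : ℝ)).smul_const (y - x)).const_add x
    exact (by simpa using hf' : HasFDerivAt f f' (x + (0 : ℝ) • (y - x))).comp_hasDerivAt 0 hline
  have hslope := hφ_convex.le_slope_of_hasDerivAt (left_mem_Icc.2 zero_le_one)
    (right_mem_Icc.2 zero_le_one) one_pos hφ_deriv
  simp only [slope, φ, sub_zero, inv_one, one_smul, zero_smul, add_zero, smul_eq_mul, one_mul,
    add_sub_cancel, vsub_eq_sub] at hslope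
  linarith

theorem ConvexOn.add_inner_gradient_sub_le [NormedAddCommGroup E] [InnerProductSpace ℝ E]
    [CompleteSpace E] {s : Set E} {f : E → ℝ} {x y : E} (hf : ConvexOn ℝ s f) (hx : x ∈ s)
    (hy : y ∈ s) (hfx : DifferentiableAt ℝ f x) : f x + ⟪y - x, gradient f x⟫ ≤ f y := by
  simpa [real_inner_comm] using
    hf.add_fderiv_sub_le hx hy (hasGradientAt_iff_hasFDerivAt.mp hfx.hasGradientAt)

variable [NormedAddCommGroup E] [InnerProductSpace ℝ E] [CompleteSpace E] {f : E → ℝ} {x : E}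

theorem ConvexOn.add_mul_inner_gradient_le_smul (hf : ConvexOn ℝ univ f)
    (hfx : DifferentiableAt ℝ f x) (c : ℝ) : f x + (c - 1) * ⟪x, gradient f x⟫ ≤ f (c • x) := by
  have h := hf.add_inner_gradient_sub_le (mem_univ x) (mem_univ (c • x)) hfx
  rwa [show c • x - x = (c - 1) • x by module, real_inner_smul_left] at h

theorem ConvexOn.inner_gradient_le_sub_one_mul_of_two_smul_le (hf : ConvexOn ℝ univ f)
    (hfx : DifferentiableAt ℝ f x) {C : ℝ} (hC : f ((2 : ℝ) • x) ≤ C * f x) :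
    ⟪x, gradient f x⟫ ≤ (C - 1) * f x := by
  have h := hf.add_mul_inner_gradient_le_smul hfx 2
  rw [show (2 : ℝ) - 1 = 1 by norm_num, one_mul] at h
  linarith

theorem ConvexOn.div_mul_le_inner_gradient_of_inv_smul_le (hf : ConvexOn ℝ univ f)
    (hfx : DifferentiableAt ℝ f x) (hfx_nonneg : 0 ≤ f x) {K : ℝ} (hK : 1 < K)
    (hKx : f (K⁻¹ • x) ≤ 1 / (2 * K) * f x) :
    2 * K / (2 * K - 1) * f x ≤ ⟪x, gradient f x⟫ := by
  have hK₀ : 0 < K := by linarith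
  have h := (hf.add_mul_inner_gradient_le_smul hfx K⁻¹).trans hKx
  have h' : (2 * K - 1) * f x ≤ 2 * (K - 1) * ⟪x, gradient f x⟫ := by
    have := mul_le_mul_of_nonneg_left h (by positivity : (0 : ℝ) ≤ 2 * K)
    field_simp at this
    linarith
  -- `h'` is the sharper bound with constant `(2K - 1) / (2(K - 1)) ≥ 2K / (2K - 1)`.
  rw [div_mul_eq_mul_div, div_le_iff₀ (by linarith)]
  nlinarith [mul_nonneg (sub_nonneg.2 hK.le) hfx_nonneg]

end ConvexGradient

theorem inner_grad_bounds_general {N : ℕ}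
    (G : EuclideanSpace ℝ (Fin N) → ℝ) (hG : IsGFun G)
    (K₁ : ℝ)
    (hDel2 : ∀ x : EuclideanSpace ℝ (Fin N), G ((2 : ℝ) • x) ≤ K₁ * G x)
    (K₂ : ℝ) (hK₂ : 1 < K₂)
    (hNab2 : ∀ x : EuclideanSpace ℝ (Fin N), G x ≤ (1 / (2 * K₂)) * G (K₂ • x)) :
    ∀ x : EuclideanSpace ℝ (Fin N),
      (2 * K₂ / (2 * K₂ - 1)) * G x ≤ ⟪x, gradient G x⟫ ∧
        ⟪x, gradient G x⟫ ≤ K₁ * G x := by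
  obtain ⟨hG_smooth, hG_convex, -, -, hG_nonneg, -⟩ := hG
  intro x
  have hGx := (hG_smooth.differentiable one_ne_zero) x
  have hNab2x := hNab2 (K₂⁻¹ • x)
  rw [smul_smul, mul_inv_cancel₀ (by linarith), one_smul] at hNab2x
  refine ⟨hG_convex.div_mul_le_inner_gradient_of_inv_smul_le hGx (hG_nonneg x) hK₂ hNab2x, ?_⟩
  linarith [hG_convex.inner_gradient_le_sub_one_mul_of_two_smul_le hGx (hDel2 x), hG_nonneg x]

/-- Appendix, inequality (A.1):
`(2K₂/(2K₂−1)) G(x) ≤ ⟨x,∇G(x)⟩ ≤ K₁ G(x)` for all `x`. -/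
theorem inner_grad_bounds {N : ℕ}
    (G : EuclideanSpace ℝ (Fin N) → ℝ) (hG : IsGFun G)
    (K₁ : ℝ) (hK₁ : 2 < K₁)
    (hDel2 : ∀ x : EuclideanSpace ℝ (Fin N), G ((2 : ℝ) • x) ≤ K₁ * G x)
    (K₂ : ℝ) (hK₂ : 1 < K₂)
    (hNab2 : ∀ x : EuclideanSpace ℝ (Fin N), G x ≤ (1 / (2 * K₂)) * G (K₂ • x)) :
    ∀ x : EuclideanSpace ℝ (Fin N),
      (2 * K₂ / (2 * K₂ - 1)) * G x ≤ ⟪x, gradient G x⟫ ∧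
        ⟪x, gradient G x⟫ ≤ K₁ * G x :=
  inner_grad_bounds_general G hG K₁ hDel2 K₂ hK₂ hNab2
end
end
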